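/- Let X, 𝒫, 𝒜, σ be as in the context, let X₁,…,X_k ⊆ C_k be partition sets mapped cyclically onto each other by σ, and refine each as X_i = ⋃_{j=1}^{s} X_{ij} into s nonempty disjoint subsets. Let 𝒜_S be the algebra of functions constant on the sets of the refined partition, and suppose both 𝒜 and 𝒜_S are invariant under σ and σ⁻¹. For a positive integer r let C̃_r := {x ∈ ⋃ᵢXᵢ : r is the smallest positive integer such that x and σʳ(x) lie in one common X_{ij}}. Then the commutants in 𝒜_S⋊_σ̃ℤ satisfy 𝒜_S′ = 𝒜′ \ {Σ_{n} fₙδⁿ ∈ 𝒜′ : fₙ does not vanish identically on C̃_{k·l} for some n and some l with k ∣ n and l ∤ (n/k)}. -/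

import Mathlib

open scoped Classical

noncomputable section

namespace PaperTRS

/-- The algebra of complex valued functions constant on each set of the family `P`. -/
def partAlg {X J : Type*} (P : J → Set X) : Subalgebra ℂ (X → ℂ) where
  carrier := {h | ∀ i, ∀ x ∈ P i, ∀ y ∈ P i, h x = h y}
  mul_mem' := by
    intro a b ha hb i x hx y hy
    simp only [Pi.mul_apply, ha i x hx y hy, hb i x hx y hy]
  add_mem' := by
    intro a b ha hb i x hx y hy
    simp only [Pi.add_apply, ha i x hx y hy, hb i x hx y hy]
  algebraMap_mem' := by intro r i x hx y hy; rfl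

/-- Piecewise constant functions on `ℝ` whose jumps all lie in the set `T`. -/
def pcAlgOn (T : Set ℝ) : Subalgebra ℂ (ℝ → ℂ) where
  carrier := {h | ∀ x y : ℝ, x ∉ T → y ∉ T →
    (∀ u ∈ T, u ∉ Set.Icc (min x y) (max x y)) → h x = h y}
  mul_mem' := by
    intro a b ha hb x y hx hy hxy
    simp only [Pi.mul_apply, ha x y hx hy hxy, hb x y hx hy hxy]
  add_mem' := by
    intro a b ha hb x y hx hy hxy
    simp only [Pi.add_apply, ha x y hx hy hxy, hb x y hx hy hxy]
  algebraMap_mem' := by intro r x y _ _ _; rfl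

/-- Invariance of an algebra of functions under a self-map of `X`. -/
def AlgInvariant {X : Type*} (A : Subalgebra ℂ (X → ℂ)) (σ : X → X) : Prop :=
  ∀ h ∈ A, (h ∘ σ) ∈ A

/-- `Sep A σ n = {x | ∃ h ∈ A, h x ≠ σ̃ⁿ(h) x}`, where `σ̃ⁿ(h) = h ∘ σ⁻ⁿ`. -/
def Sep {X : Type*} (A : Subalgebra ℂ (X → ℂ)) (σ : Equiv.Perm X) (n : ℤ) : Set X :=
  {x | ∃ h ∈ A, h x ≠ h ((σ ^ n)⁻¹ x)}

/-- Twisted convolution product on the crossed product `⋊ ℤ`: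
`(fₙ δⁿ) * (gₘ δᵐ) = fₙ · σ̃ⁿ(gₘ) · δ^{n+m}` extended bilinearly. -/
def cmul {X : Type*} (σ : Equiv.Perm X) (f g : ℤ →₀ (X → ℂ)) : ℤ →₀ (X → ℂ) :=
  f.sum fun n a => g.sum fun m b =>
    Finsupp.single (n + m) (fun x => a x * b ((σ ^ n)⁻¹ x))

/-- Membership of an element `Σ fₙ δⁿ` in the crossed product of the algebra `B` with `ℤ`. -/
def InCrossed {X : Type*} (B : Subalgebra ℂ (X → ℂ)) (f : ℤ →₀ (X → ℂ)) : Prop :=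
  ∀ n, f n ∈ B

/-- The commutant of `A` inside the crossed product `B ⋊ ℤ` (where `A ⊆ B`). -/
def commutant {X : Type*} (A B : Subalgebra ℂ (X → ℂ)) (σ : Equiv.Perm X) :
    Set (ℤ →₀ (X → ℂ)) :=
  {f | InCrossed B f ∧
    ∀ a ∈ A, cmul σ f (Finsupp.single 0 a) = cmul σ (Finsupp.single 0 a) f}

/-- The jump points `t₁ < ⋯ < t_N` extended by `t₀ = -∞` and `t_{N+1} = +∞`. -/
def tE (N : ℕ) (t : Fin N → ℝ) (i : ℕ) : EReal :=
  if h : 1 ≤ i ∧ i ≤ N then ((t ⟨i - 1, by omega⟩ : ℝ) : EReal)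
  else if i = 0 then ⊥ else ⊤

/-- The open interval `I_i = (t_i, t_{i+1})` for `0 ≤ i ≤ N`. -/
def openPiece (N : ℕ) (t : Fin N → ℝ) (i : ℕ) : Set ℝ :=
  {x : ℝ | tE N t i < (x : EReal) ∧ (x : EReal) < tE N t (i + 1)}

/-- The sets of the partition of `ℝ` determined by the jump points: the open
intervals `I_0, …, I_N` together with the singletons `{t_i}`. -/
def pieces (N : ℕ) (t : Fin N → ℝ) : Set (Set ℝ) :=
  {P | (∃ i : ℕ, i ≤ N ∧ P = openPiece N t i) ∨ (∃ i : Fin N, P = {t i})}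

/-- `C_k`: points `x` such that `k` is the smallest positive integer with `x` and
`σᵏ(x)` in one common set of the partition. -/
def Ck (N : ℕ) (t : Fin N → ℝ) (σ : Equiv.Perm ℝ) (k : ℕ) : Set ℝ :=
  {x | IsLeast {j : ℕ | 0 < j ∧ ∃ P ∈ pieces N t, x ∈ P ∧ (σ ^ j) x ∈ P} k}

end PaperTRS
namespace PaperTRS

/-- With `p` points `s i 0 < ⋯ < s i (p-1)` added in the interval `I_{α i}`, the `j`-th
open subinterval of the refined partition of `I_{α i}`, for `j = 0, …, p`. -/
def subPiece (N : ℕ) (t : Fin N → ℝ) {k p : ℕ} (α : Fin k → ℕ)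
    (s : Fin k → Fin p → ℝ) (i : Fin k) (j : Fin (p + 1)) : Set ℝ :=
  {x : ℝ |
    (if hj : (j : ℕ) = 0 then tE N t (α i)
      else ((s i ⟨(j : ℕ) - 1, by have := j.isLt; omega⟩ : ℝ) : EReal)) < (x : EReal) ∧
    (x : EReal) <
      (if hj : (j : ℕ) = p then tE N t (α i + 1)
        else ((s i ⟨(j : ℕ), by have := j.isLt; omega⟩ : ℝ) : EReal))}

/-- The sets of the refined partition of the union of the intervals `I_{α i}`: the open
subintervals determined by the added jump points together with the singleton jump points. -/
def cyclePieces (N : ℕ) (t : Fin N → ℝ) {k p : ℕ} (α : Fin k → ℕ)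
    (s : Fin k → Fin p → ℝ) : Set (Set ℝ) :=
  {P | (∃ i j, P = subPiece N t α s i j) ∨ (∃ i j, P = ({s i j} : Set ℝ))}

/-- `C̃_r`: points `x` of `⋃ᵢ I_{α i}` such that `r` is the smallest positive integer with
`x` and `σʳ(x)` in one common set of the refined partition. -/
def Ctil (N : ℕ) (t : Fin N → ℝ) (σ : Equiv.Perm ℝ) {k p : ℕ} (α : Fin k → ℕ)
    (s : Fin k → Fin p → ℝ) (r : ℕ) : Set ℝ :=
  {x | x ∈ ⋃ i, openPiece N t (α i) ∧
    IsLeast {j : ℕ | 0 < j ∧ ∃ P ∈ cyclePieces N t α s, x ∈ P ∧ (σ ^ j) x ∈ P} r}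

/-- The cyclic setup: `k` pairwise distinct open intervals `I_{α 0}, …, I_{α (k-1)}` of the
original partition, contained in `C_k` and permuted cyclically by `σ`, with `p` jump points
`s i 0 < ⋯ < s i (p-1)` added into each of them, and both the original algebra `𝒜` and the
refined algebra `𝒜_S` invariant under `σ` and `σ⁻¹`. -/
def CyclicSetup (N : ℕ) (t : Fin N → ℝ) (σ : Equiv.Perm ℝ) {k p : ℕ} (α : Fin k → ℕ)
    (s : Fin k → Fin p → ℝ) : Prop :=
  0 < k ∧ (∀ i, α i ≤ N) ∧ Function.Injective α ∧
  (∀ i j, s i j ∈ openPiece N t (α i)) ∧ (∀ i, StrictMono (s i)) ∧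
  (∀ i : Fin k, ∃ i' : Fin k, ((i' : ℕ) = ((i : ℕ) + 1) % k) ∧
    σ '' openPiece N t (α i) = openPiece N t (α i')) ∧
  (∀ i, openPiece N t (α i) ⊆ Ck N t σ k) ∧
  AlgInvariant (pcAlgOn (Set.range t)) σ ∧
  AlgInvariant (pcAlgOn (Set.range t)) σ.symm ∧
  AlgInvariant (pcAlgOn (Set.range t ∪ ⋃ i, Set.range (s i))) σ ∧
  AlgInvariant (pcAlgOn (Set.range t ∪ ⋃ i, Set.range (s i))) σ.symm

/-- `C_k` for the partition `P` of a general set `X`. -/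
def CkGen {X ι : Type*} (P : ι → Set X) (σ : Equiv.Perm X) (k : ℕ) : Set X :=
  {x | IsLeast {j : ℕ | 0 < j ∧ ∃ i, x ∈ P i ∧ (σ ^ j) x ∈ P i} k}

/-- `C̃_r` relative to a family `Q` of refined pieces inside the subset `base` of `X`. -/
def CtilGen {X ι : Type*} (σ : Equiv.Perm X) (Q : ι → Set X) (base : Set X) (r : ℕ) :
    Set X :=
  {x | x ∈ base ∧ IsLeast {j : ℕ | 0 < j ∧ ∃ i, x ∈ Q i ∧ (σ ^ j) x ∈ Q i} r}

/-- `C_∞`: points that never return to the partition set they lie in. -/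
def Cinf {X ι : Type*} (P : ι → Set X) (σ : Equiv.Perm X) : Set X :=
  {x | ∀ k : ℕ, 0 < k → ¬∃ i, x ∈ P i ∧ (σ ^ k) x ∈ P i}

end PaperTRS

/-!
An element `Σ fₙ δⁿ` commutes with the algebra of a partition exactly when `σⁿ x` lies in the
block of `x` wherever `fₙ x ≠ 0`. These `n` form a subgroup of `ℤ`, generated by the first
return time of `x` to its block. For a point `x` of the cycle `⋃ᵢ X_i ⊆ C_k` the group is `kℤ`
for `𝒜` and `klℤ` for `𝒜_S`, where `x ∈ C̃_{kl}` and `l ≤ s` by pigeonhole among the `s` pieces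
of `X_i` visited by `σ^{kj} x`; so a coefficient `fₙ` with `k ∣ n` that is nonzero at `x` is
allowed in `𝒜_S'` iff `l ∣ n/k`. Outside the cycle both partitions have the same blocks.
-/

namespace PaperTRS

open Function Set

lemma _root_.Finsupp.sum_single_apply_of_map_zero {α M : Type*} [AddCommMonoid M]
    (f : α →₀ M) {g : α → M → M} (hg : ∀ i, g i 0 = 0) (i : α) :
    (f.sum fun j b => Finsupp.single j (g j b)) i = g i (f i) := by
  rw [Finsupp.sum_apply, Finsupp.sum_eq_single i]
  · simp
  · intro j _ hji; simp [hji]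
  · intro; simp [hg]

lemma _root_.Int.mem_addSubgroup_iff_dvd_of_isLeast {H : AddSubgroup ℤ} {m : ℕ}
    (hm : IsLeast {j : ℕ | 0 < j ∧ (j : ℤ) ∈ H} m) {n : ℤ} : n ∈ H ↔ (m : ℤ) ∣ n := by
  have hmin : IsLeast {g : ℤ | g ∈ H ∧ 0 < g} m := by
    refine ⟨⟨hm.1.2, by exact_mod_cast hm.1.1⟩, fun g ⟨hgH, hg⟩ => ?_⟩
    have : m ≤ g.toNat := hm.2 ⟨by omega, by rwa [Int.toNat_of_nonneg hg.le]⟩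
    omega
  rw [AddSubgroup.cyclic_of_min hmin, ← AddSubgroup.zmultiples_eq_closure, Int.mem_zmultiples_iff]

section ReturnTimes

variable {X : Type*}

lemma cmul_single_zero_right_apply (σ : Equiv.Perm X) (f : ℤ →₀ (X → ℂ)) (a : X → ℂ) (n : ℤ)
    (x : X) : cmul σ f (Finsupp.single 0 a) n x = f n x * a ((σ ^ n)⁻¹ x) := by
  have hsingle (m : ℤ) (b : X → ℂ) :
      ((Finsupp.single 0 a).sum fun m' c => Finsupp.single (m + m') fun x => b x * c ((σ ^ m)⁻¹ x))
        = Finsupp.single m fun x => b x * a ((σ ^ m)⁻¹ x) := by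
    rw [Finsupp.sum_single_index] <;> simp [← Pi.zero_def]
  simp only [cmul, hsingle]
  exact congrFun (f.sum_single_apply_of_map_zero (fun _ => by ext; simp) n) x

lemma cmul_single_zero_left_apply (σ : Equiv.Perm X) (f : ℤ →₀ (X → ℂ)) (a : X → ℂ) (n : ℤ)
    (x : X) : cmul σ (Finsupp.single 0 a) f n x = a x * f n x := by
  rw [cmul, Finsupp.sum_single_index]
  · simpa using congrFun (f.sum_single_apply_of_map_zero
      (g := fun m b x => a x * b ((σ ^ (0 : ℤ))⁻¹ x)) (fun _ => by ext; simp) n) x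
  · simp [← Pi.zero_def]

def orbitValues (A : Subalgebra ℂ (X → ℂ)) (σ : Equiv.Perm X) (x : X) (m : ℤ) (a : A) : ℂ :=
  (a : X → ℂ) ((σ ^ m) x)

/-- Phrased as the periods of the orbit of `x` seen through `A`, so that it is a subgroup with no
assumption on `A`; for invariant `A` it is `{n | ∀ a ∈ A, a (σⁿ x) = a x}` (`mem_returnTimes_iff`),
for the algebra of a partition the set of return times of `x` to its block. -/
def returnTimes (A : Subalgebra ℂ (X → ℂ)) (σ : Equiv.Perm X) (x : X) : AddSubgroup ℤ where
  carrier := {n | Periodic (orbitValues A σ x) n}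
  add_mem' ha hb := Periodic.add_period (f := orbitValues A σ x) ha hb
  zero_mem' m := by simp
  neg_mem' ha := Periodic.neg (f := orbitValues A σ x) ha

lemma mem_returnTimes {A : Subalgebra ℂ (X → ℂ)} {σ : Equiv.Perm X} {x : X} {n : ℤ} :
    n ∈ returnTimes A σ x ↔ Periodic (orbitValues A σ x) n :=
  Iff.rfl

variable {A : Subalgebra ℂ (X → ℂ)} {σ : Equiv.Perm X}

lemma returnTimes_anti {A' : Subalgebra ℂ (X → ℂ)} (hAA' : A ≤ A') (x : X) :
    returnTimes A' σ x ≤ returnTimes A σ x :=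
  fun _ hn m => funext fun a => congrFun (mem_returnTimes.1 hn m) ⟨a, hAA' a.2⟩

lemma AlgInvariant.zpow (hσ : AlgInvariant A σ) (hσ' : AlgInvariant A σ.symm) (m : ℤ) :
    AlgInvariant A ⇑(σ ^ m) := by
  induction m using Int.induction_on with
  | zero => intro a ha; simpa using ha
  | succ m ih =>
    intro a ha
    convert hσ _ (ih a ha) using 1
    ext; simp [zpow_add_one]
  | pred m ih =>
    intro a ha
    convert hσ' _ (ih a ha) using 1
    ext; simp [zpow_sub_one]

lemma sub_mem_returnTimes_iff (hσ : AlgInvariant A σ) (hσ' : AlgInvariant A σ.symm) {x : X}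
    {m n : ℤ} : m - n ∈ returnTimes A σ x ↔ ∀ a ∈ A, a ((σ ^ m) x) = a ((σ ^ n) x) := by
  rw [mem_returnTimes]
  constructor
  · intro h a ha
    simpa [orbitValues] using congrFun (h n) ⟨a, ha⟩
  · intro h j
    ext ⟨a, ha⟩
    have := h _ (AlgInvariant.zpow hσ hσ' (j - n) a ha)
    simp only [comp_apply, ← Equiv.Perm.mul_apply, ← zpow_add] at this
    rwa [sub_add_cancel, sub_add_eq_add_sub, add_sub_assoc] at this

lemma mem_returnTimes_iff (hσ : AlgInvariant A σ) (hσ' : AlgInvariant A σ.symm) {x : X} {n : ℤ} :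
    n ∈ returnTimes A σ x ↔ ∀ a ∈ A, a ((σ ^ n) x) = a x := by
  simpa using sub_mem_returnTimes_iff (x := x) (m := n) (n := 0) hσ hσ'

lemma mem_commutant_iff {B : Subalgebra ℂ (X → ℂ)} (hσ : AlgInvariant A σ)
    (hσ' : AlgInvariant A σ.symm) {f : ℤ →₀ (X → ℂ)} :
    f ∈ commutant A B σ ↔ InCrossed B f ∧ ∀ n x, f n x ≠ 0 → n ∈ returnTimes A σ x := by
  have hcomm (a : X → ℂ) : cmul σ f (Finsupp.single 0 a) = cmul σ (Finsupp.single 0 a) f ↔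
      ∀ n x, f n x ≠ 0 → a ((σ ^ n)⁻¹ x) = a x := by
    simp only [Finsupp.ext_iff, funext_iff, cmul_single_zero_right_apply,
      cmul_single_zero_left_apply, mul_comm (a _) (f _ _), mul_eq_mul_left_iff,
      or_iff_not_imp_right]
  simp only [commutant, mem_ofPred_eq, hcomm]
  refine and_congr_right fun _ => ⟨fun h n x hfx => ?_, fun h a ha n x hfx => ?_⟩
  · rw [← neg_mem_iff, mem_returnTimes_iff hσ hσ']
    exact fun a ha => by simpa [zpow_neg] using h a ha n x hfx
  · simpa [zpow_neg] using (mem_returnTimes_iff hσ hσ').1 (neg_mem (h n x hfx)) a ha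

end ReturnTimes

section Partition

variable {X ι : Type*} {T : ι → Set X} {σ : Equiv.Perm X}

lemma indicator_mem_partAlg (hT : Pairwise (Disjoint on T)) (i : ι) :
    (T i).indicator 1 ∈ partAlg T := by
  intro j x hx y hy
  by_cases hji : j = i
  · subst hji
    simp [hx, hy]
  · simp [(hT hji).notMem_of_mem_left hx, (hT hji).notMem_of_mem_left hy]

lemma forall_partAlg_apply_eq_iff (hT : Pairwise (Disjoint on T)) (hcover : ⋃ i, T i = univ)
    {x y : X} : (∀ a ∈ partAlg T, a y = a x) ↔ ∃ i, x ∈ T i ∧ y ∈ T i := by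
  refine ⟨fun h => ?_, fun ⟨i, hx, hy⟩ a ha => ha i y hy x hx⟩
  obtain ⟨i, hx⟩ := mem_iUnion.1 (hcover ▸ mem_univ x)
  refine ⟨i, hx, ?_⟩
  by_contra hy
  simpa [hx, hy] using h _ (indicator_mem_partAlg hT i)

lemma mem_returnTimes_partAlg_iff (hT : Pairwise (Disjoint on T)) (hcover : ⋃ i, T i = univ)
    (hσ : AlgInvariant (partAlg T) σ) (hσ' : AlgInvariant (partAlg T) σ.symm) {x : X} {n : ℤ} :
    n ∈ returnTimes (partAlg T) σ x ↔ ∃ i, x ∈ T i ∧ (σ ^ n) x ∈ T i :=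
  (mem_returnTimes_iff hσ hσ').trans (forall_partAlg_apply_eq_iff hT hcover)

lemma mem_CkGen_iff (hT : Pairwise (Disjoint on T)) (hcover : ⋃ i, T i = univ)
    (hσ : AlgInvariant (partAlg T) σ) (hσ' : AlgInvariant (partAlg T) σ.symm) {x : X} {k : ℕ} :
    x ∈ CkGen T σ k ↔ IsLeast {j : ℕ | 0 < j ∧ (j : ℤ) ∈ returnTimes (partAlg T) σ x} k := by
  simp only [mem_returnTimes_partAlg_iff hT hcover hσ hσ', zpow_natCast]
  rfl

lemma exists_pos_le_card_mul_mem_returnTimes {R : Type*} [Fintype R]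
    (hσ : AlgInvariant (partAlg T) σ) (hσ' : AlgInvariant (partAlg T) σ.symm) (g : R → ι) (c : ℤ)
    {x : X} (h : ∀ j : ℕ, ∃ r, (σ ^ (c * j)) x ∈ T (g r)) :
    ∃ j : ℕ, 0 < j ∧ j ≤ Fintype.card R ∧ c * j ∈ returnTimes (partAlg T) σ x := by
  choose ρ hρ using h
  obtain ⟨u, v, huv, hρuv⟩ := Fintype.exists_ne_map_eq_of_card_lt
    (fun j : Fin (Fintype.card R + 1) => ρ j) (by simp)
  wlog hlt : u < v generalizing u v
  · exact this v u huv.symm hρuv.symm (huv.symm.lt_of_le (not_lt.1 hlt))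
  refine ⟨v - u, by omega, by omega, ?_⟩
  rw [Nat.cast_sub hlt.le, mul_sub, sub_mem_returnTimes_iff hσ hσ']
  exact fun a ha => ha _ _ (hρuv ▸ hρ v) _ (hρ u)

end Partition

section Refinement

variable {X J K R : Type*} {P : J → Set X} {ι : K → J} {Q : K → R → Set X}

def refinement (P : J → Set X) (ι : K → J) (Q : K → R → Set X) :
    {j // j ∉ range ι} ⊕ K × R → Set X :=
  Sum.elim (fun j => P j.1) (fun q => Q q.1 q.2)

lemma subset_of_iUnion_eq (hQcover : ∀ i, ⋃ r, Q i r = P (ι i)) (i : K) (r : R) :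
    Q i r ⊆ P (ι i) :=
  hQcover i ▸ subset_iUnion (Q i) r

lemma pairwise_disjoint_refinement (hP : Pairwise (Disjoint on P)) (hι : Injective ι)
    (hQ : ∀ i, Pairwise (Disjoint on Q i)) (hQcover : ∀ i, ⋃ r, Q i r = P (ι i)) :
    Pairwise (Disjoint on refinement P ι Q) := by
  have hsub := subset_of_iUnion_eq hQcover
  rintro (⟨j, hj⟩ | ⟨i, r⟩) (⟨j', hj'⟩ | ⟨i', r'⟩) hne
  · exact hP fun h => hne (congrArg Sum.inl (Subtype.ext h))
  · exact (hP fun h => hj ⟨i', h.symm⟩).mono_right (hsub i' r')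
  · exact (hP fun h => hj' ⟨i, h⟩).mono_left (hsub i r)
  · by_cases hi : i = i'
    · subst hi
      exact hQ i fun h => hne (congrArg (fun r => Sum.inr (i, r)) h)
    · exact (hP (hι.ne hi)).mono (hsub i r) (hsub i' r')

lemma iUnion_refinement (hcover : ⋃ j, P j = univ) (hQcover : ∀ i, ⋃ r, Q i r = P (ι i)) :
    ⋃ b, refinement P ι Q b = univ := by
  refine eq_univ_of_forall fun x => ?_
  obtain ⟨j, hj⟩ := mem_iUnion.1 (hcover ▸ mem_univ x)
  by_cases hjι : j ∈ range ι
  · obtain ⟨i, rfl⟩ := hjι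
    obtain ⟨r, hr⟩ := mem_iUnion.1 ((hQcover i).symm ▸ hj)
    exact mem_iUnion.2 ⟨Sum.inr (i, r), hr⟩
  · exact mem_iUnion.2 ⟨Sum.inl ⟨j, hjι⟩, hj⟩

lemma partAlg_le_partAlg_refinement (hQcover : ∀ i, ⋃ r, Q i r = P (ι i)) :
    partAlg P ≤ partAlg (refinement P ι Q) := by
  rintro a ha (⟨j, -⟩ | ⟨i, r⟩)
  · exact ha j
  · exact fun x hx y hy =>
      ha (ι i) x (subset_of_iUnion_eq hQcover i r hx) y (subset_of_iUnion_eq hQcover i r hy)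

lemma exists_refinement_of_notMem {x y : X}
    (hx : x ∉ ⋃ i, P (ι i)) (h : ∃ j, x ∈ P j ∧ y ∈ P j) :
    ∃ b, x ∈ refinement P ι Q b ∧ y ∈ refinement P ι Q b := by
  obtain ⟨j, hxj, hyj⟩ := h
  have hj : j ∉ range ι := by
    rintro ⟨i, rfl⟩
    exact hx (mem_iUnion.2 ⟨i, hxj⟩)
  exact ⟨Sum.inl ⟨j, hj⟩, hxj, hyj⟩

lemma exists_refinement_iff (hP : Pairwise (Disjoint on P)) {x y : X} (hx : x ∈ ⋃ i, P (ι i)) :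
    (∃ b, x ∈ refinement P ι Q b ∧ y ∈ refinement P ι Q b) ↔
      ∃ q : K × R, x ∈ Q q.1 q.2 ∧ y ∈ Q q.1 q.2 := by
  refine ⟨?_, fun ⟨q, hq⟩ => ⟨Sum.inr q, hq⟩⟩
  rintro ⟨⟨j, hj⟩ | q, hxb, hyb⟩
  · obtain ⟨i, hxi⟩ := mem_iUnion.1 hx
    exact absurd hxi ((hP fun h => hj ⟨i, h.symm⟩).notMem_of_mem_left hxb)
  · exact ⟨q, hxb, hyb⟩

end Refinement

section Cycle

variable {X J K R : Type*} {P : J → Set X} {ι : K → J} {Q : K → R → Set X} {σ : Equiv.Perm X}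

lemma returnTimes_le_returnTimes_refinement_of_notMem (hP : Pairwise (Disjoint on P))
    (hcover : ⋃ j, P j = univ) (hσP : AlgInvariant (partAlg P) σ)
    (hσP' : AlgInvariant (partAlg P) σ.symm) (hσQ : AlgInvariant (partAlg (refinement P ι Q)) σ)
    (hσQ' : AlgInvariant (partAlg (refinement P ι Q)) σ.symm) {x : X} (hx : x ∉ ⋃ i, P (ι i)) :
    returnTimes (partAlg P) σ x ≤ returnTimes (partAlg (refinement P ι Q)) σ x := by
  intro n hn
  obtain ⟨b, hxb, hyb⟩ :=
    exists_refinement_of_notMem hx ((mem_returnTimes_partAlg_iff hP hcover hσP hσP').1 hn)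
  exact (mem_returnTimes_iff hσQ hσQ').2 fun a ha => ha b _ hyb _ hxb

lemma mem_CtilGen_iff (hP : Pairwise (Disjoint on P))
    (hdisj : Pairwise (Disjoint on refinement P ι Q)) (hcover : ⋃ b, refinement P ι Q b = univ)
    (hσQ : AlgInvariant (partAlg (refinement P ι Q)) σ)
    (hσQ' : AlgInvariant (partAlg (refinement P ι Q)) σ.symm) {x : X} {r : ℕ} :
    x ∈ CtilGen σ (fun q : K × R => Q q.1 q.2) (⋃ i, P (ι i)) r ↔ x ∈ ⋃ i, P (ι i) ∧
      IsLeast {j : ℕ | 0 < j ∧ (j : ℤ) ∈ returnTimes (partAlg (refinement P ι Q)) σ x} r := by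
  refine and_congr_right fun hx => ?_
  simp only [mem_returnTimes_partAlg_iff hdisj hcover hσQ hσQ', zpow_natCast,
    exists_refinement_iff hP hx]

/-- Returns to `P (ι i)` happen exactly at multiples of `k`, and by pigeonhole two of the points
`σ^(k j) x`, `j ≤ card R`, lie in the same `Q i r`. -/
lemma exists_isLeast_returnTimes_refinement [Fintype R] (hP : Pairwise (Disjoint on P))
    (hcover : ⋃ j, P j = univ) (hQcover : ∀ i, ⋃ r, Q i r = P (ι i))
    (hσP : AlgInvariant (partAlg P) σ) (hσP' : AlgInvariant (partAlg P) σ.symm)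
    (hσQ : AlgInvariant (partAlg (refinement P ι Q)) σ)
    (hσQ' : AlgInvariant (partAlg (refinement P ι Q)) σ.symm) {k : ℕ} {i : K} {x : X}
    (hxi : x ∈ P (ι i)) (hxk : x ∈ CkGen P σ k) :
    ∃ l, 1 ≤ l ∧ l ≤ Fintype.card R ∧
      IsLeast {j : ℕ | 0 < j ∧ (j : ℤ) ∈ returnTimes (partAlg (refinement P ι Q)) σ x} (k * l) := by
  have hk := (mem_CkGen_iff hP hcover hσP hσP').1 hxk
  have horbit (j : ℕ) : ∃ r, (σ ^ ((k : ℤ) * j)) x ∈ refinement P ι Q (Sum.inr (i, r)) := by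
    obtain ⟨i', hxi', hyi'⟩ := (mem_returnTimes_partAlg_iff hP hcover hσP hσP').1
      ((Int.mem_addSubgroup_iff_dvd_of_isLeast hk).2 (dvd_mul_right _ _))
    obtain rfl : i' = ι i := by_contra fun hne => (hP hne).ne_of_mem hxi' hxi rfl
    exact mem_iUnion.1 ((hQcover i).symm ▸ hyi')
  obtain ⟨j, hj0, hjR, hjmem⟩ := exists_pos_le_card_mul_mem_returnTimes hσQ hσQ' _ k horbit
  have hex : ∃ m : ℕ, 0 < m ∧ (m : ℤ) ∈ returnTimes (partAlg (refinement P ι Q)) σ x :=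
    ⟨k * j, Nat.mul_pos hk.1.1 hj0, by exact_mod_cast hjmem⟩
  have hm := Nat.isLeast_find hex
  obtain ⟨l, hl⟩ : k ∣ Nat.find hex := by
    exact_mod_cast (Int.mem_addSubgroup_iff_dvd_of_isLeast hk).1
      (returnTimes_anti (partAlg_le_partAlg_refinement hQcover) x hm.1.2)
  rw [hl] at hm
  refine ⟨l, Nat.pos_of_mul_pos_left hm.1.1, ?_, hm⟩
  exact (Nat.le_of_mul_le_mul_left (hm.2 ⟨Nat.mul_pos hk.1.1 hj0, by exact_mod_cast hjmem⟩)
    hk.1.1).trans hjR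

end Cycle

theorem statement15_general {X J : Type*} (P : J → Set X)
    (hdisj : ∀ i j, i ≠ j → Disjoint (P i) (P j))
    (hcover : ⋃ i, P i = Set.univ)
    (σ : Equiv.Perm X)
    (k s : ℕ) (ι : Fin k → J) (hι : Function.Injective ι)
    (hsub : ∀ i, P (ι i) ⊆ CkGen P σ k)
    (Q : Fin k → Fin s → Set X)
    (hQdisj : ∀ i, ∀ r r' : Fin s, r ≠ r' → Disjoint (Q i r) (Q i r'))
    (hQcover : ∀ i, ⋃ r, Q i r = P (ι i))
    (h1 : AlgInvariant (partAlg P) σ)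
    (h2 : AlgInvariant (partAlg P) σ.symm)
    (h3 : AlgInvariant (partAlg (Sum.elim
      (fun j : {j : J // j ∉ Set.range ι} => P j.1)
      (fun q : Fin k × Fin s => Q q.1 q.2))) σ)
    (h4 : AlgInvariant (partAlg (Sum.elim
      (fun j : {j : J // j ∉ Set.range ι} => P j.1)
      (fun q : Fin k × Fin s => Q q.1 q.2))) σ.symm) :
    commutant (partAlg (Sum.elim
        (fun j : {j : J // j ∉ Set.range ι} => P j.1)
        (fun q : Fin k × Fin s => Q q.1 q.2)))
      (partAlg (Sum.elim
        (fun j : {j : J // j ∉ Set.range ι} => P j.1)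
        (fun q : Fin k × Fin s => Q q.1 q.2))) σ =
    commutant (partAlg P)
        (partAlg (Sum.elim
          (fun j : {j : J // j ∉ Set.range ι} => P j.1)
          (fun q : Fin k × Fin s => Q q.1 q.2))) σ \
      {f : ℤ →₀ (X → ℂ) | ∃ n : ℤ, ∃ l : ℕ, 1 ≤ l ∧ l ≤ s ∧
        (k : ℤ) ∣ n ∧ ¬((l : ℤ) ∣ n / (k : ℤ)) ∧
        ¬(∀ x ∈ CtilGen σ (fun q : Fin k × Fin s => Q q.1 q.2)
            (⋃ i, P (ι i)) (k * l), f n x = 0)} := by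
  have hdisj' := pairwise_disjoint_refinement hdisj hι hQdisj hQcover
  have hcover' := iUnion_refinement hcover hQcover
  ext f
  simp only [mem_sdiff, mem_ofPred_eq, mem_commutant_iff h1 h2, mem_commutant_iff h3 h4]
  constructor
  · rintro ⟨hB, hS⟩
    refine ⟨⟨hB, fun n x hfx =>
      returnTimes_anti (partAlg_le_partAlg_refinement hQcover) x (hS n x hfx)⟩, ?_⟩
    rintro ⟨n, l, -, -, hkn, hln, hfn⟩
    obtain ⟨x, hx, hfx⟩ := not_forall₂.1 hfn
    have hleast := ((mem_CtilGen_iff hdisj hdisj' hcover' h3 h4).1 hx).2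
    refine hln ((Int.dvd_div_iff_mul_dvd hkn).2 ?_)
    exact_mod_cast (Int.mem_addSubgroup_iff_dvd_of_isLeast hleast).1 (hS n x hfx)
  · rintro ⟨⟨hB, hR⟩, hbad⟩
    refine ⟨hB, fun n x hfx => ?_⟩
    by_cases hx : x ∈ ⋃ i, P (ι i)
    · obtain ⟨i, hxi⟩ := mem_iUnion.1 hx
      obtain ⟨l, hl1, hls, hleast⟩ := exists_isLeast_returnTimes_refinement hdisj hcover hQcover
        h1 h2 h3 h4 hxi (hsub i hxi)
      have hkn : (k : ℤ) ∣ n := (Int.mem_addSubgroup_iff_dvd_of_isLeast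
        ((mem_CkGen_iff hdisj hcover h1 h2).1 (hsub i hxi))).1 (hR n x hfx)
      refine (Int.mem_addSubgroup_iff_dvd_of_isLeast hleast).2 ?_
      rw [Nat.cast_mul, ← Int.dvd_div_iff_mul_dvd hkn]
      by_contra hln
      exact hbad ⟨n, l, hl1, by simpa using hls, hkn, hln,
        fun h => hfx (h x ((mem_CtilGen_iff hdisj hdisj' hcover' h3 h4).2 ⟨hx, hleast⟩))⟩
    · exact returnTimes_le_returnTimes_refinement_of_notMem hdisj hcover h1 h2 h3 h4 hx
        (hR n x hfx)

/-- partition sets `X_{ι 0}, …, X_{ι (k-1)} ⊆ C_k` are permuted cyclically by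
`σ` and each is refined into `s` nonempty disjoint subsets `Q i r`; with `𝒜` and `𝒜_S`
invariant under `σ` and `σ⁻¹`, the commutants in `𝒜_S ⋊_σ̃ ℤ` satisfy
`𝒜_S' = 𝒜' \ {Σ fₙδⁿ : fₙ ≢ 0 on C̃_{k·l} for some n, l with k ∣ n and l ∤ n/k}`. -/
theorem statement15 {X J : Type*} [Countable J] (P : J → Set X)
    (hne : ∀ i, (P i).Nonempty)
    (hdisj : ∀ i j, i ≠ j → Disjoint (P i) (P j))
    (hcover : ⋃ i, P i = Set.univ)
    (σ : Equiv.Perm X)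
    (k s : ℕ) (hk : 0 < k) (ι : Fin k → J) (hι : Function.Injective ι)
    (hsub : ∀ i, P (ι i) ⊆ CkGen P σ k)
    (hcyc : ∀ i : Fin k, ∃ i' : Fin k, ((i' : ℕ) = ((i : ℕ) + 1) % k) ∧
      σ '' P (ι i) = P (ι i'))
    (Q : Fin k → Fin s → Set X)
    (hQne : ∀ i r, (Q i r).Nonempty)
    (hQdisj : ∀ i, ∀ r r' : Fin s, r ≠ r' → Disjoint (Q i r) (Q i r'))
    (hQcover : ∀ i, ⋃ r, Q i r = P (ι i))
    (h1 : AlgInvariant (partAlg P) σ)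
    (h2 : AlgInvariant (partAlg P) σ.symm)
    (h3 : AlgInvariant (partAlg (Sum.elim
      (fun j : {j : J // j ∉ Set.range ι} => P j.1)
      (fun q : Fin k × Fin s => Q q.1 q.2))) σ)
    (h4 : AlgInvariant (partAlg (Sum.elim
      (fun j : {j : J // j ∉ Set.range ι} => P j.1)
      (fun q : Fin k × Fin s => Q q.1 q.2))) σ.symm) :
    commutant (partAlg (Sum.elim
        (fun j : {j : J // j ∉ Set.range ι} => P j.1)
        (fun q : Fin k × Fin s => Q q.1 q.2)))
      (partAlg (Sum.elim
        (fun j : {j : J // j ∉ Set.range ι} => P j.1)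
        (fun q : Fin k × Fin s => Q q.1 q.2))) σ =
    commutant (partAlg P)
        (partAlg (Sum.elim
          (fun j : {j : J // j ∉ Set.range ι} => P j.1)
          (fun q : Fin k × Fin s => Q q.1 q.2))) σ \
      {f : ℤ →₀ (X → ℂ) | ∃ n : ℤ, ∃ l : ℕ, 1 ≤ l ∧ l ≤ s ∧
        (k : ℤ) ∣ n ∧ ¬((l : ℤ) ∣ n / (k : ℤ)) ∧
        ¬(∀ x ∈ CtilGen σ (fun q : Fin k × Fin s => Q q.1 q.2)
            (⋃ i, P (ι i)) (k * l), f n x = 0)} :=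
  statement15_general P hdisj hcover σ k s ι hι hsub Q hQdisj hQcover h1 h2 h3 h4

end PaperTRS
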